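/- Let C be the middle-third Cantor set. Then {1/x₁ + 1/x₂ + 1/x₃ + 1/x₄ : x₁ ∈ C ∩ [6/27, 7/27], x₂ ∈ C ∩ [8/27, 1/3], x₃, x₄ ∈ C ∩ [2/3, 1]} ⊇ [62/7, 10]. -/

import Mathlib

/-!
With `x₁ = 6/27 + u₁/27`, `x₂ = 8/27 + u₂/27`, `x₃ = 2/3 + u₃/3`, `x₄ = 2/3 + u₄/3` and
`uᵢ ∈ C`, the claim becomes `[62/7, 10] ⊆ {∑ φᵢ(uᵢ) : u ∈ C⁴}` for decreasing functions `φᵢ`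
whose slopes on `[0, 1]` lie between `mᵢ` and `Mᵢ`. Such a sum covers `[∑ φᵢ 1, ∑ φᵢ 0]` as
soon as `Mᵢ ≤ ∑_{j ≠ i} mⱼ`: starting from the unit box, replace one coordinate interval at a
time by its left or right third, keeping `y` between the values of the sum at the two extreme
corners of the box. The slope condition says that the drop of `φᵢ` across the removed middle
third is covered by the drops of the other coordinates, so one of the two thirds always works.
After `k` rounds the corner is a point of `C⁴` whose value is within `3⁻ᵏ ∑ Mᵢ` of `y`, and the
image of the compact set `C⁴` is closed.
-/

open Set Finset Function Filter Topology

theorem div_three_mem_cantorSet {x : ℝ} (hx : x ∈ cantorSet) : x / 3 ∈ cantorSet := by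
  rw [cantorSet_eq_union_halves]
  exact Or.inl ⟨x, hx, rfl⟩

theorem two_add_div_three_mem_cantorSet {x : ℝ} (hx : x ∈ cantorSet) :
    (2 + x) / 3 ∈ cantorSet := by
  rw [cantorSet_eq_union_halves]
  exact Or.inr ⟨x, hx, rfl⟩

theorem one_mem_cantorSet : (1 : ℝ) ∈ cantorSet :=
  Set.mem_iInter.2 fun n => by
    induction n with
    | zero => simp
    | succ n ih => exact Or.inr ⟨1, ih, by norm_num⟩

def IsCantorBlock (x ℓ : ℝ) : Prop :=
  ∀ u ∈ cantorSet, x + ℓ * u ∈ cantorSet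

namespace IsCantorBlock

variable {x ℓ : ℝ}

theorem zero_one : IsCantorBlock 0 1 := fun u hu => by simpa using hu

theorem left (h : IsCantorBlock x ℓ) : IsCantorBlock x (ℓ / 3) := fun u hu => by
  convert h _ (div_three_mem_cantorSet hu) using 2
  ring

theorem right (h : IsCantorBlock x ℓ) : IsCantorBlock (x + 2 * ℓ / 3) (ℓ / 3) := fun u hu => by
  convert h _ (two_add_div_three_mem_cantorSet hu) using 1
  ring

theorem mem (h : IsCantorBlock x ℓ) : x ∈ cantorSet := by
  simpa using h 0 zero_mem_cantorSet

theorem add_mem (h : IsCantorBlock x ℓ) : x + ℓ ∈ cantorSet := by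
  simpa using h 1 one_mem_cantorSet

theorem nonneg (h : IsCantorBlock x ℓ) : 0 ≤ x :=
  (cantorSet_subset_unitInterval h.mem).1

theorem add_le_one (h : IsCantorBlock x ℓ) : x + ℓ ≤ 1 :=
  (cantorSet_subset_unitInterval h.add_mem).2

theorem mem_inter_Icc (h : IsCantorBlock x ℓ) (hℓ : 0 ≤ ℓ) {u : ℝ} (hu : u ∈ cantorSet) :
    x + ℓ * u ∈ cantorSet ∩ Icc x (x + ℓ) := by
  obtain ⟨hu₀, hu₁⟩ := cantorSet_subset_unitInterval hu
  exact ⟨h u hu, by nlinarith, by nlinarith⟩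

/-- `hgap` says that the values of `g + r'` on the left third reach down to those of `g + r` on the
right third, so one of the two thirds still brackets `y`. -/
theorem exists_third_of_gap {g : ℝ → ℝ} {y r r' : ℝ} (h : IsCantorBlock x ℓ)
    (hlo : g (x + ℓ) + r' ≤ y) (hhi : y ≤ g x + r)
    (hgap : g (x + ℓ / 3) + r' ≤ g (x + 2 * ℓ / 3) + r) :
    ∃ x', IsCantorBlock x' (ℓ / 3) ∧ g (x' + ℓ / 3) + r' ≤ y ∧ y ≤ g x' + r := by
  by_cases hy : y ≤ g (x + 2 * ℓ / 3) + r
  · exact ⟨_, h.right, by rwa [show x + 2 * ℓ / 3 + ℓ / 3 = x + ℓ by ring], hy⟩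
  · exact ⟨x, h.left, hgap.trans (not_le.1 hy).le, hhi⟩

end IsCantorBlock

def HasDescentRates (f : ℝ → ℝ) (m M : ℝ) : Prop :=
  ∀ s t, 0 ≤ s → s ≤ t → t ≤ 1 → m * (t - s) ≤ f s - f t ∧ f s - f t ≤ M * (t - s)

theorem HasDescentRates.continuousOn {f : ℝ → ℝ} {m M : ℝ} (hf : HasDescentRates f m M)
    (hm : 0 ≤ m) : ContinuousOn f (Icc 0 1) := by
  refine (LipschitzOnWith.of_dist_le' (K := M) fun s hs t ht => ?_).continuousOn
  rw [Real.dist_eq, Real.dist_eq]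
  rcases le_total s t with hst | hts
  · have := hf s t hs.1 hst ht.2
    rw [abs_of_nonneg (by nlinarith), abs_of_nonpos (by linarith)]
    linarith
  · have := hf t s ht.1 hts hs.2
    rw [abs_of_nonpos (by nlinarith), abs_of_nonneg (by linarith)]
    linarith

theorem one_div_hasDescentRates {a b : ℝ} (ha : 0 < a) (hb : 0 ≤ b) :
    HasDescentRates (fun t => 1 / (a + b * t)) (b / (a + b) ^ 2) (b / a ^ 2) := by
  intro s t hs hst ht
  have hd : 0 ≤ b * (t - s) := mul_nonneg hb (by linarith)
  have hs' : a ≤ a + b * s := by nlinarith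
  have hst' : a + b * s ≤ a + b * t := by nlinarith
  have ht' : a + b * t ≤ a + b := by nlinarith
  have hdiff : 1 / (a + b * s) - 1 / (a + b * t) = b * (t - s) / ((a + b * s) * (a + b * t)) := by
    rw [div_sub_div _ _ (by linarith) (by linarith)]
    ring
  rw [hdiff, div_mul_eq_mul_div, div_mul_eq_mul_div]
  constructor
  · exact div_le_div_of_nonneg_left hd (by nlinarith) (by nlinarith)
  · exact div_le_div_of_nonneg_left hd (by positivity) (by nlinarith)

section Sums

variable {ι : Type*} [Fintype ι]

def CantorBoxBrackets (φ : ι → ℝ → ℝ) (y : ℝ) (p w : ι → ℝ) : Prop :=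
  (∀ i, IsCantorBlock (p i) (w i)) ∧ ∑ i, φ i (p i + w i) ≤ y ∧ y ≤ ∑ i, φ i (p i)

variable {φ : ι → ℝ → ℝ} {m M : ι → ℝ}

theorem CantorBoxBrackets.sum_sub_le (hφ : ∀ i, HasDescentRates (φ i) (m i) (M i)) {y ℓ : ℝ}
    (hℓ : 0 ≤ ℓ) {p : ι → ℝ} (h : CantorBoxBrackets φ y p fun _ => ℓ) :
    ∑ i, φ i (p i) - y ≤ (∑ i, M i) * ℓ := by
  have hterm : ∀ i, φ i (p i) - φ i (p i + ℓ) ≤ M i * ℓ := fun i => by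
    have := (hφ i (p i) (p i + ℓ) (h.1 i).nonneg (by linarith) (h.1 i).add_le_one).2
    rwa [add_sub_cancel_left] at this
  calc ∑ i, φ i (p i) - y ≤ ∑ i, (φ i (p i) - φ i (p i + ℓ)) := by
        rw [sum_sub_distrib]; linarith [h.2.1]
    _ ≤ (∑ i, M i) * ℓ := by
        rw [sum_mul]; exact sum_le_sum fun i _ => hterm i

theorem continuousOn_sum_apply_cantorSet_pi (hm : ∀ i, 0 ≤ m i)
    (hφ : ∀ i, HasDescentRates (φ i) (m i) (M i)) :
    ContinuousOn (fun p : ι → ℝ => ∑ i, φ i (p i)) (Set.univ.pi fun _ => cantorSet) :=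
  continuousOn_finsetSum _ fun i _ => ((hφ i).continuousOn (hm i)).comp
    (continuous_apply i).continuousOn fun _ hp => cantorSet_subset_unitInterval (hp i (mem_univ i))

variable [DecidableEq ι]

theorem sub_le_sum_erase_sub_of_hasDescentRates (hm : ∀ i, 0 ≤ m i)
    (hφ : ∀ i, HasDescentRates (φ i) (m i) (M i)) (hM : ∀ i, M i ≤ ∑ j ∈ univ.erase i, m j)
    {p w : ι → ℝ} (hp : ∀ j, IsCantorBlock (p j) (w j)) {i : ι} (hw : ∀ j, w i / 3 ≤ w j) :
    φ i (p i + w i / 3) - φ i (p i + 2 * w i / 3) ≤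
      ∑ j ∈ univ.erase i, (φ j (p j) - φ j (p j + w j)) := by
  have hwi : 0 ≤ w i := by linarith [hw i]
  calc φ i (p i + w i / 3) - φ i (p i + 2 * w i / 3)
      ≤ M i * (w i / 3) := by
        have := (hφ i (p i + w i / 3) (p i + 2 * w i / 3) (by linarith [(hp i).nonneg])
          (by linarith) (by linarith [(hp i).add_le_one])).2
        rwa [show p i + 2 * w i / 3 - (p i + w i / 3) = w i / 3 by ring] at this
    _ ≤ ∑ j ∈ univ.erase i, m j * (w i / 3) := by
        rw [← sum_mul]; exact mul_le_mul_of_nonneg_right (hM i) (by positivity)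
    _ ≤ ∑ j ∈ univ.erase i, m j * w j :=
        sum_le_sum fun j _ => mul_le_mul_of_nonneg_left (hw j) (hm j)
    _ ≤ ∑ j ∈ univ.erase i, (φ j (p j) - φ j (p j + w j)) := by
        refine sum_le_sum fun j _ => ?_
        have := (hφ j (p j) (p j + w j) (hp j).nonneg (by linarith [hw j]) (hp j).add_le_one).1
        rwa [add_sub_cancel_left] at this

theorem CantorBoxBrackets.exists_update {y : ℝ} {p w : ι → ℝ} (h : CantorBoxBrackets φ y p w)
    {i : ι} (hgap : φ i (p i + w i / 3) - φ i (p i + 2 * w i / 3) ≤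
      ∑ j ∈ univ.erase i, (φ j (p j) - φ j (p j + w j))) :
    ∃ x, CantorBoxBrackets φ y (update p i x) (update w i (w i / 3)) := by
  obtain ⟨hp, hlo, hhi⟩ := h
  rw [← add_sum_erase _ _ (mem_univ i)] at hlo hhi
  rw [sum_sub_distrib] at hgap
  obtain ⟨x, hx, hxlo, hxhi⟩ := (hp i).exists_third_of_gap hlo hhi (by linarith)
  have hrest (f : ι → ℝ → ℝ → ℝ) (v : ℝ) :
      ∑ j ∈ univ.erase i, f j (update p i x j) (update w i v j) =
        ∑ j ∈ univ.erase i, f j (p j) (w j) :=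
    sum_congr rfl fun j hj => by simp only [update_of_ne (ne_of_mem_erase hj)]
  refine ⟨x, fun j => ?_, ?_, ?_⟩
  · rcases eq_or_ne j i with rfl | hj
    · simpa using hx
    · simpa [update_of_ne hj] using hp j
  · rw [← add_sum_erase _ _ (mem_univ i), hrest (fun j a b => φ j (a + b))]
    simpa using hxlo
  · rw [← add_sum_erase _ _ (mem_univ i), hrest (fun j a _ => φ j a) 0]
    simpa using hxhi

theorem exists_cantorBoxBrackets_refine (hm : ∀ i, 0 ≤ m i)
    (hφ : ∀ i, HasDescentRates (φ i) (m i) (M i)) (hM : ∀ i, M i ≤ ∑ j ∈ univ.erase i, m j)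
    {y ℓ : ℝ} (hℓ : 0 ≤ ℓ) {p : ι → ℝ} (h : CantorBoxBrackets φ y p fun _ => ℓ) (S : Finset ι) :
    ∃ q, CantorBoxBrackets φ y q fun j => if j ∈ S then ℓ / 3 else ℓ := by
  induction S using Finset.induction_on with
  | empty => simpa using ⟨p, h⟩
  | insert i S hi ih =>
    obtain ⟨q, hq⟩ := ih
    have hw : ∀ j, (if i ∈ S then ℓ / 3 else ℓ) / 3 ≤ if j ∈ S then ℓ / 3 else ℓ := fun j => by
      simp only [hi, if_false]
      split_ifs <;> linarith
    obtain ⟨x, hx⟩ := hq.exists_update (sub_le_sum_erase_sub_of_hasDescentRates hm hφ hM hq.1 hw)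
    refine ⟨update q i x, ?_⟩
    convert hx using 1
    funext j
    rcases eq_or_ne j i with rfl | hj
    · simp [hi]
    · simp [hj]

theorem exists_cantorBoxBrackets_pow (hm : ∀ i, 0 ≤ m i)
    (hφ : ∀ i, HasDescentRates (φ i) (m i) (M i)) (hM : ∀ i, M i ≤ ∑ j ∈ univ.erase i, m j)
    {y : ℝ} (hy : y ∈ Icc (∑ i, φ i 1) (∑ i, φ i 0)) (k : ℕ) :
    ∃ p, CantorBoxBrackets φ y p fun _ => (1 / 3 : ℝ) ^ k := by
  induction k with
  | zero =>
    exact ⟨0, fun _ => by simpa using IsCantorBlock.zero_one, by simpa using hy.1,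
      by simpa using hy.2⟩
  | succ k ih =>
    obtain ⟨p, hp⟩ := ih
    obtain ⟨q, hq⟩ := exists_cantorBoxBrackets_refine hm hφ hM (by positivity) hp univ
    refine ⟨q, ?_⟩
    convert hq using 2
    simp [pow_succ, div_eq_mul_inv]

theorem Icc_subset_image_sum_cantorSet_pi (hm : ∀ i, 0 ≤ m i)
    (hφ : ∀ i, HasDescentRates (φ i) (m i) (M i)) (hM : ∀ i, M i ≤ ∑ j ∈ univ.erase i, m j) :
    Icc (∑ i, φ i 1) (∑ i, φ i 0) ⊆
      (fun p : ι → ℝ => ∑ i, φ i (p i)) '' Set.univ.pi fun _ => cantorSet := by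
  intro y hy
  have hclosed : IsClosed ((fun p : ι → ℝ => ∑ i, φ i (p i)) '' Set.univ.pi fun _ => cantorSet) :=
    ((isCompact_univ_pi fun _ => isCompact_cantorSet).image_of_continuousOn
      (continuousOn_sum_apply_cantorSet_pi hm hφ)).isClosed
  rw [← hclosed.closure_eq, Metric.mem_closure_iff]
  intro ε hε
  have hlim : Tendsto (fun k : ℕ => (∑ i, M i) * (1 / 3 : ℝ) ^ k) atTop (𝓝 0) := by
    simpa using (tendsto_pow_atTop_nhds_zero_of_lt_one (r := (1 / 3 : ℝ)) (by norm_num)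
      (by norm_num)).const_mul (∑ i, M i)
  obtain ⟨k, hk⟩ := (hlim.eventually (gt_mem_nhds hε)).exists
  obtain ⟨p, hp⟩ := exists_cantorBoxBrackets_pow hm hφ hM hy k
  refine ⟨_, ⟨p, fun i _ => (hp.1 i).mem, rfl⟩, ?_⟩
  rw [Real.dist_eq, abs_sub_comm, abs_of_nonneg (sub_nonneg.2 hp.2.2)]
  exact (hp.sum_sub_le hφ (by positivity)).trans_lt hk

end Sums

theorem four_reciprocals_cantorSet_supset_Icc_sixtytwo_sevenths_ten :
    Set.Icc (62 / 7 : ℝ) 10 ⊆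
      {y : ℝ | ∃ x₁ ∈ cantorSet ∩ Set.Icc (6 / 27 : ℝ) (7 / 27),
        ∃ x₂ ∈ cantorSet ∩ Set.Icc (8 / 27 : ℝ) (1 / 3),
        ∃ x₃ ∈ cantorSet ∩ Set.Icc (2 / 3 : ℝ) 1,
        ∃ x₄ ∈ cantorSet ∩ Set.Icc (2 / 3 : ℝ) 1,
        y = 1 / x₁ + 1 / x₂ + 1 / x₃ + 1 / x₄} := by
  intro y hy
  let a : Fin 4 → ℝ := ![6 / 27, 8 / 27, 2 / 3, 2 / 3]
  let b : Fin 4 → ℝ := ![1 / 27, 1 / 27, 1 / 3, 1 / 3]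
  have ha : ∀ i, 0 < a i := by intro i; fin_cases i <;> simp [a]
  have hb : ∀ i, 0 < b i := by intro i; fin_cases i <;> simp [b]
  have hblock : ∀ i, IsCantorBlock (a i) (b i) := by
    intro i; fin_cases i
    · convert IsCantorBlock.zero_one.left.right.left using 1 <;> norm_num [a, b]
    · convert IsCantorBlock.zero_one.left.right.right using 1 <;> norm_num [a, b]
    all_goals convert IsCantorBlock.zero_one.right using 1 <;>
      norm_num [Matrix.cons_val_two, Matrix.cons_val_three, a, b]
  have hthick : ∀ i, b i / a i ^ 2 ≤ ∑ j ∈ univ.erase i, b j / (a j + b j) ^ 2 := by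
    intro i
    fin_cases i <;> norm_num [sum_erase_eq_sub, Fin.sum_univ_four, Matrix.cons_val_two,
      Matrix.cons_val_three, a, b]
  have hlo : ∑ i, 1 / (a i + b i * 1) = 62 / 7 := by
    norm_num [Fin.sum_univ_four, Matrix.cons_val_two, Matrix.cons_val_three, a, b]
  have hhi : 10 ≤ ∑ i, 1 / (a i + b i * 0) := by
    norm_num [Fin.sum_univ_four, Matrix.cons_val_two, Matrix.cons_val_three, a, b]
  obtain ⟨p, hp, rfl⟩ := Icc_subset_image_sum_cantorSet_pi
    (fun i => div_nonneg (hb i).le (sq_nonneg _))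
    (fun i => one_div_hasDescentRates (ha i) (hb i).le) hthick
    (by rw [Set.mem_Icc, hlo]; exact ⟨hy.1, hy.2.trans hhi⟩)
  have hx i : a i + b i * p i ∈ cantorSet ∩ Icc (a i) (a i + b i) :=
    (hblock i).mem_inter_Icc (hb i).le (hp i trivial)
  refine ⟨_, ?_, _, ?_, _, ?_, _, ?_, Fin.sum_univ_four _⟩
  all_goals convert hx _ using 3 <;> norm_num [Matrix.cons_val_two, Matrix.cons_val_three, a, b]
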